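/- arXiv:1412.1634 — 4 statements merged into one kernel-verified Lean document; each statement's English description precedes it below -/
import Mathlib

section
/- Let 0<q<1 and let a,b,c be real numbers with a>b>c>0 and b>1. Then for all x ≥ 0 the Turán type inequality [φ(q^a,q^b;q,x)]² ≤ φ(q^a,q^{b-c};q,x)·φ(q^a,q^{b+c};q,x) holds. -/
/-!
The three series differ only through the factor `1 / (q^t;q)_n` of their `n`-th terms, and
`(q^{b-c};q)_n (q^{b+c};q)_n ≤ ((q^b;q)_n)^2` factor by factor, since `q^{b-c} q^{b+c} = (q^b)^2`
and, by AM-GM, `2 q^b ≤ q^{b-c} + q^{b+c}`. So the `n`-th terms satisfy `u_n^2 ≤ v_n w_n`, and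
Cauchy-Schwarz for series gives the inequality. Bernoulli's inequality `(1 - c)^{q^k} ≤ 1 - c q^k`
bounds `(c;q)_n` below by `(1 - c)^{1/(1-q)} > 0`, so the three series converge or diverge together
(they diverge once `(1 - q) x > 1`), and in the divergent case all three `tsum`s are `0`.
-/

/-- The q-shifted factorial `(a;q)_n = ∏_{k=0}^{n-1} (1 - a q^k)`. -/
noncomputable def qPoch (q a : ℝ) (n : ℕ) : ℝ :=
  ∏ k ∈ Finset.range n, (1 - a * q ^ k)

/-- The q-Kummer confluent hypergeometric function
`φ(q^a, q^c; q, x) = Σ_{n=0}^∞ (q^a;q)_n (1-q)^n / ((q^c;q)_n (q;q)_n) x^n`. -/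
noncomputable def qKummer (q a c x : ℝ) : ℝ :=
  ∑' n : ℕ, qPoch q (q ^ a) n * (1 - q) ^ n / (qPoch q (q ^ c) n * qPoch q q n) * x ^ n

open Finset

theorem qPoch_le_one {q c : ℝ} (hq0 : 0 ≤ q) (hq1 : q ≤ 1) (hc0 : 0 ≤ c) (hc1 : c ≤ 1) (n : ℕ) :
    qPoch q c n ≤ 1 := by
  refine prod_le_one (fun k _ => ?_) fun k _ => ?_
  · have := mul_le_one₀ hc1 (pow_nonneg hq0 k) (pow_le_one₀ hq0 hq1)
    linarith
  · have := mul_nonneg hc0 (pow_nonneg hq0 k)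
    linarith

theorem one_sub_rpow_le_qPoch {q c : ℝ} (hq0 : 0 < q) (hq1 : q < 1) (hc0 : 0 ≤ c) (hc1 : c < 1)
    (n : ℕ) : (1 - c) ^ (1 / (1 - q)) ≤ qPoch q c n := by
  have hc : 0 < 1 - c := by linarith
  have hgeom : ∑ k ∈ range n, q ^ k ≤ 1 / (1 - q) := by
    have := geom_sum_Ico_le_of_lt_one (m := 0) (n := n) hq0.le hq1
    rwa [← range_eq_Ico, pow_zero] at this
  calc (1 - c) ^ (1 / (1 - q)) ≤ (1 - c) ^ (∑ k ∈ range n, q ^ k) :=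
        Real.rpow_le_rpow_of_exponent_ge hc (by linarith) hgeom
    _ = ∏ k ∈ range n, (1 - c) ^ (q ^ k) := Real.rpow_sum_of_pos hc _ _
    _ ≤ qPoch q c n := by
        refine prod_le_prod (fun k _ => (Real.rpow_pos_of_pos hc _).le) fun k _ => ?_
        have bernoulli := rpow_one_add_le_one_add_mul_self (s := -c) (by linarith)
          (pow_nonneg hq0.le k) (pow_le_one₀ hq0.le hq1.le)
        rw [← sub_eq_add_neg] at bernoulli
        linarith

theorem qPoch_pos {q c : ℝ} (hq0 : 0 < q) (hq1 : q < 1) (hc0 : 0 ≤ c) (hc1 : c < 1) (n : ℕ) :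
    0 < qPoch q c n :=
  (Real.rpow_pos_of_pos (by linarith) _).trans_le (one_sub_rpow_le_qPoch hq0 hq1 hc0 hc1 n)

theorem qPoch_mul_le_sq {q r s y : ℝ} (hq0 : 0 ≤ q) (hq1 : q ≤ 1) (hr0 : 0 ≤ r) (hr1 : r ≤ 1)
    (hs0 : 0 ≤ s) (hs1 : s ≤ 1) (hrs : r * s = y ^ 2) (n : ℕ) :
    qPoch q r n * qPoch q s n ≤ qPoch q y n ^ 2 := by
  rw [qPoch, qPoch, qPoch, ← prod_mul_distrib, ← prod_pow]
  refine prod_le_prod (fun k _ => ?_) fun k _ => ?_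
  · have hqk := pow_le_one₀ (n := k) hq0 hq1
    exact mul_nonneg (by nlinarith [pow_nonneg hq0 k]) (by nlinarith [pow_nonneg hq0 k])
  · have amgm := two_mul_le_add_of_sq_le_mul hr0 hs0 hrs.ge
    have hrst : r * s * (q ^ k) ^ 2 = y ^ 2 * (q ^ k) ^ 2 := by rw [hrs]
    nlinarith [mul_le_mul_of_nonneg_right amgm (pow_nonneg hq0 k)]

theorem qKummer_eq_tsum_div (q a c x : ℝ) :
    qKummer q a c x =
      ∑' n, qPoch q (q ^ a) n * (1 - q) ^ n * x ^ n / qPoch q q n / qPoch q (q ^ c) n :=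
  tsum_congr fun n => by ring

theorem tsum_sq_le_tsum_mul_tsum_of_sq_le_mul {u v w : ℕ → ℝ} (hv : ∀ n, 0 ≤ v n)
    (hw : ∀ n, 0 ≤ w n) (hsv : Summable v) (hsw : Summable w) (h : ∀ n, u n ^ 2 ≤ v n * w n) :
    (∑' n, u n) ^ 2 ≤ (∑' n, v n) * ∑' n, w n := by
  have hsu : Summable u := by
    refine Summable.of_norm_bounded ((hsv.add hsw).div_const 2) fun n => ?_
    have := two_mul_le_add_of_sq_le_mul (hv n) (hw n) ((sq_abs (u n)).trans_le (h n))
    rw [Real.norm_eq_abs]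
    linarith
  refine le_of_tendsto_of_tendsto' (hsu.hasSum.tendsto_sum_nat.pow 2)
    (hsv.hasSum.tendsto_sum_nat.mul hsw.hasSum.tendsto_sum_nat) fun n => ?_
  exact sum_sq_le_sum_mul_sum_of_sq_le_mul _ (fun i _ => hv i) (fun i _ => hw i) fun i _ => h i

theorem Summable.div_of_le {S t : ℕ → ℝ} {ε : ℝ} (hS : Summable S) (hS0 : ∀ n, 0 ≤ S n)
    (hε : 0 < ε) (ht : ∀ n, ε ≤ t n) : Summable fun n => S n / t n :=
  (hS.div_const ε).of_nonneg_of_le (fun n => div_nonneg (hS0 n) (hε.le.trans (ht n)))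
    fun n => div_le_div_of_nonneg_left (hS0 n) hε (ht n)

theorem tsum_div_sq_le_tsum_div_mul_tsum_div {S p r s : ℕ → ℝ} {ε δ : ℝ} (hS : ∀ n, 0 ≤ S n)
    (hp : ∀ n, 0 < p n) (hp1 : ∀ n, p n ≤ 1) (hε : 0 < ε) (hr : ∀ n, ε ≤ r n)
    (hδ : 0 < δ) (hs : ∀ n, δ ≤ s n) (hrs : ∀ n, r n * s n ≤ p n ^ 2) :
    (∑' n, S n / p n) ^ 2 ≤ (∑' n, S n / r n) * ∑' n, S n / s n := by
  have hr0 n : 0 < r n := hε.trans_le (hr n)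
  have hs0 n : 0 < s n := hδ.trans_le (hs n)
  by_cases hSum : Summable S
  · refine tsum_sq_le_tsum_mul_tsum_of_sq_le_mul (fun n => div_nonneg (hS n) (hr0 n).le)
      (fun n => div_nonneg (hS n) (hs0 n).le) (hSum.div_of_le hS hε hr)
      (hSum.div_of_le hS hδ hs) fun n => ?_
    rw [div_pow, div_mul_div_comm, ← sq]
    exact div_le_div_of_nonneg_left (sq_nonneg _) (mul_pos (hr0 n) (hs0 n)) (hrs n)
  · -- `p ≤ 1` makes `S / p` dominate `S`, so the left-hand series diverges too and its sum is `0`.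
    have hnot : ¬Summable fun n => S n / p n := fun h =>
      hSum (h.of_nonneg_of_le hS fun n => le_div_self (hS n) (hp n) (hp1 n))
    rw [tsum_eq_zero_of_not_summable hnot, sq, zero_mul]
    exact mul_nonneg (tsum_nonneg fun n => div_nonneg (hS n) (hr0 n).le)
      (tsum_nonneg fun n => div_nonneg (hS n) (hs0 n).le)

theorem statement_1_general (q a b c : ℝ) (hq0 : 0 < q) (hq1 : q < 1)
    (hab : a > b) (hbc : b > c) (hc : c > 0)
    (x : ℝ) (hx : 0 ≤ x) :
    (qKummer q a b x) ^ 2 ≤ qKummer q a (b - c) x * qKummer q a (b + c) x := by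
  have hpow (t : ℝ) (ht : 0 < t) : 0 ≤ q ^ t ∧ q ^ t < 1 :=
    ⟨(Real.rpow_pos_of_pos hq0 t).le, Real.rpow_lt_one hq0.le hq1 ht⟩
  obtain ⟨hqa0, hqa1⟩ := hpow a (by linarith)
  obtain ⟨hqb0, hqb1⟩ := hpow b (by linarith)
  obtain ⟨hqv0, hqv1⟩ := hpow (b - c) (by linarith)
  obtain ⟨hqw0, hqw1⟩ := hpow (b + c) (by linarith)
  have hexp : q ^ (b - c) * q ^ (b + c) = (q ^ b) ^ 2 := by
    rw [sq, ← Real.rpow_add hq0, ← Real.rpow_add hq0]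
    ring_nf
  have hnum (n : ℕ) : 0 ≤ qPoch q (q ^ a) n * (1 - q) ^ n * x ^ n / qPoch q q n :=
    div_nonneg (mul_nonneg (mul_nonneg (qPoch_pos hq0 hq1 hqa0 hqa1 n).le
      (pow_nonneg (by linarith) n)) (pow_nonneg hx n)) (qPoch_pos hq0 hq1 hq0.le hq1 n).le
  simp only [qKummer_eq_tsum_div]
  exact tsum_div_sq_le_tsum_div_mul_tsum_div hnum (qPoch_pos hq0 hq1 hqb0 hqb1)
    (qPoch_le_one hq0.le hq1.le hqb0 hqb1.le) (Real.rpow_pos_of_pos (by linarith) _)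
    (one_sub_rpow_le_qPoch hq0 hq1 hqv0 hqv1) (Real.rpow_pos_of_pos (by linarith) _)
    (one_sub_rpow_le_qPoch hq0 hq1 hqw0 hqw1)
    (qPoch_mul_le_sq hq0.le hq1.le hqv0 hqv1.le hqw0 hqw1.le hexp)

theorem statement_1 (q a b c : ℝ) (hq0 : 0 < q) (hq1 : q < 1)
    (hab : a > b) (hbc : b > c) (hc : c > 0) (hb1 : b > 1)
    (x : ℝ) (hx : 0 ≤ x) :
    (qKummer q a b x) ^ 2 ≤ qKummer q a (b - c) x * qKummer q a (b + c) x :=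
  statement_1_general q a b c hq0 hq1 hab hbc hc x hx
end

section
/- Let (a_n)_{n≥0} and (b_n)_{n≥0} be real sequences such that the power series A(x) = Σ_{n=0}^∞ a_n x^n and B(x) = Σ_{n=0}^∞ b_n x^n converge for |x| < r, where r > 0. If b_n > 0 for all n and the sequence (a_n/b_n)_{n≥0} is increasing, then the function x ↦ A(x)/B(x) is increasing on [0,r); if moreover (a_n/b_n) is strictly increasing, then A/B is strictly increasing on [0,r). -/
/-!
For `0 ≤ x ≤ y < r`, expanding the products as double series and symmetrising over
`(m, n) ↔ (n, m)` gives
`2 (A(y) B(x) - A(x) B(y)) = ∑_{m,n} (a_m b_n - a_n b_m) (y^m x^n - y^n x^m)`.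
Since both `a_n / b_n` and `y^n / x^n` increase with `n`, each term is a product of two factors
of the same sign, so `A(x) / B(x) ≤ A(y) / B(y)`. When `a_n / b_n` is strictly increasing
and `x < y`, the term `(m, n) = (1, 0)` is strictly positive.
-/

open Filter Asymptotics

lemma summable_norm_mul_pow_of_abs_lt {c : ℕ → ℝ} {r y : ℝ}
    (hc : ∀ x : ℝ, |x| < r → Summable (fun n => c n * x ^ n)) (hy : |y| < r) :
    Summable (fun n => ‖c n * y ^ n‖) := by
  obtain ⟨t, hyt, htr⟩ := exists_between hy
  have ht : 0 < t := (abs_nonneg y).trans_lt hyt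
  have hbdd : (fun n => c n * t ^ n) =O[atTop] (fun _ => (1 : ℝ)) :=
    (hc t (by rwa [abs_of_pos ht])).tendsto_atTop_zero.isBigO_one ℝ
  have hgeom : (fun n => c n * y ^ n) =O[atTop] fun n => (y / t) ^ n := by
    have hfactor : (fun n => c n * y ^ n) = fun n => c n * t ^ n * (y / t) ^ n := by
      ext n; rw [div_pow, mul_assoc, mul_div_cancel₀ _ (pow_ne_zero n ht.ne')]
    simpa [hfactor] using hbdd.mul (isBigO_refl (fun n => (y / t) ^ n) atTop)
  have hq : |y / t| < 1 := by rwa [abs_div, abs_of_pos ht, div_lt_one ht]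
  exact summable_of_isBigO_nat (summable_geometric_of_lt_one (abs_nonneg _) hq)
    (by simpa [abs_pow, abs_div] using hgeom.norm_left.norm_right)

lemma mul_sub_mul_mul_mul_sub_mul_nonneg {ι : Type*} [LinearOrder ι] {u v u' v' : ι → ℝ}
    (h : ∀ m n, m ≤ n → u m * v n ≤ u n * v m)
    (h' : ∀ m n, m ≤ n → u' m * v' n ≤ u' n * v' m) (m n : ι) :
    0 ≤ (u n * v m - u m * v n) * (u' n * v' m - u' m * v' n) := by
  rcases le_total m n with hmn | hnm
  · exact mul_nonneg (sub_nonneg.mpr (h m n hmn)) (sub_nonneg.mpr (h' m n hmn))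
  · exact mul_nonneg_of_nonpos_of_nonpos (sub_nonpos.mpr (h n m hnm))
      (sub_nonpos.mpr (h' n m hnm))

lemma pow_mul_pow_le_pow_mul_pow {x y : ℝ} (hx : 0 ≤ x) (hxy : x ≤ y) {m n : ℕ}
    (hmn : m ≤ n) : y ^ m * x ^ n ≤ y ^ n * x ^ m := by
  obtain ⟨k, rfl⟩ := Nat.exists_eq_add_of_le hmn
  have hyx : 0 ≤ y ^ m * x ^ m := mul_nonneg (pow_nonneg (hx.trans hxy) m) (pow_nonneg hx m)
  calc y ^ m * x ^ (m + k) = y ^ m * x ^ m * x ^ k := by ring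
    _ ≤ y ^ m * x ^ m * y ^ k := by gcongr
    _ = y ^ (m + k) * x ^ m := by ring

section PowerSeries

variable {a b : ℕ → ℝ} {r : ℝ}

lemma hasSum_mul_tsum_of_abs_lt
    (hA : ∀ x : ℝ, |x| < r → Summable (fun n => a n * x ^ n))
    (hB : ∀ x : ℝ, |x| < r → Summable (fun n => b n * x ^ n))
    {x y : ℝ} (hx : |x| < r) (hy : |y| < r) :
    HasSum (fun p : ℕ × ℕ => a p.1 * x ^ p.1 * (b p.2 * y ^ p.2))
      ((∑' n, a n * x ^ n) * ∑' n, b n * y ^ n) :=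
  HasSum.mul (f := fun n => a n * x ^ n) (g := fun n => b n * y ^ n) (hA x hx).hasSum
    (hB y hy).hasSum <| summable_mul_of_summable_norm
      (summable_norm_mul_pow_of_abs_lt hA hx) (summable_norm_mul_pow_of_abs_lt hB hy)

lemma hasSum_cross_difference
    (hA : ∀ x : ℝ, |x| < r → Summable (fun n => a n * x ^ n))
    (hB : ∀ x : ℝ, |x| < r → Summable (fun n => b n * x ^ n))
    {x y : ℝ} (hx : |x| < r) (hy : |y| < r) :
    HasSum (fun p : ℕ × ℕ =>
        (a p.1 * b p.2 - a p.2 * b p.1) * (y ^ p.1 * x ^ p.2 - y ^ p.2 * x ^ p.1))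
      (2 * ((∑' n, a n * y ^ n) * (∑' n, b n * x ^ n) -
        (∑' n, a n * x ^ n) * ∑' n, b n * y ^ n)) := by
  have hG := (hasSum_mul_tsum_of_abs_lt hA hB hy hx).sub (hasSum_mul_tsum_of_abs_lt hA hB hx hy)
  have hGswap := (Equiv.prodComm ℕ ℕ).hasSum_iff.mpr hG
  rw [two_mul]
  refine (hG.add hGswap).congr_fun fun p => ?_
  simp only [Function.comp_apply, Equiv.prodComm_apply, Prod.fst_swap, Prod.snd_swap]
  ring

lemma tsum_mul_pow_pos (hb : ∀ n, 0 < b n) {x : ℝ} (hx : 0 ≤ x)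
    (hs : Summable (fun n => b n * x ^ n)) : 0 < ∑' n, b n * x ^ n :=
  hs.tsum_pos (fun n => by have := hb n; positivity) 0 (by simpa using hb 0)

lemma cross_term_nonneg (hb : ∀ n, 0 < b n) (hmono : Monotone (fun n => a n / b n))
    {x y : ℝ} (hx : 0 ≤ x) (hxy : x ≤ y) (p : ℕ × ℕ) :
    0 ≤ (a p.1 * b p.2 - a p.2 * b p.1) * (y ^ p.1 * x ^ p.2 - y ^ p.2 * x ^ p.1) :=
  mul_sub_mul_mul_mul_sub_mul_nonneg
    (fun _ _ hmn => (div_le_div_iff₀ (hb _) (hb _)).mp (hmono hmn))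
    (fun _ _ hmn => pow_mul_pow_le_pow_mul_pow hx hxy hmn) p.2 p.1

lemma tsum_mul_tsum_le_of_monotone_div
    (hA : ∀ x : ℝ, |x| < r → Summable (fun n => a n * x ^ n))
    (hB : ∀ x : ℝ, |x| < r → Summable (fun n => b n * x ^ n))
    (hb : ∀ n, 0 < b n) (hmono : Monotone (fun n => a n / b n))
    {x y : ℝ} (hx : 0 ≤ x) (hxy : x ≤ y) (hy : y < r) :
    (∑' n, a n * x ^ n) * (∑' n, b n * y ^ n) ≤
      (∑' n, a n * y ^ n) * ∑' n, b n * x ^ n := by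
  have hsum := hasSum_cross_difference hA hB ((abs_of_nonneg hx).trans_lt (hxy.trans_lt hy))
    ((abs_of_nonneg (hx.trans hxy)).trans_lt hy)
  linarith [hsum.nonneg (cross_term_nonneg hb hmono hx hxy)]

lemma tsum_mul_tsum_lt_of_strictMono_div
    (hA : ∀ x : ℝ, |x| < r → Summable (fun n => a n * x ^ n))
    (hB : ∀ x : ℝ, |x| < r → Summable (fun n => b n * x ^ n))
    (hb : ∀ n, 0 < b n) (hmono : StrictMono (fun n => a n / b n))
    {x y : ℝ} (hx : 0 ≤ x) (hxy : x < y) (hy : y < r) :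
    (∑' n, a n * x ^ n) * (∑' n, b n * y ^ n) <
      (∑' n, a n * y ^ n) * ∑' n, b n * x ^ n := by
  have hsum := hasSum_cross_difference hA hB ((abs_of_nonneg hx).trans_lt (hxy.trans hy))
    ((abs_of_nonneg (hx.trans hxy.le)).trans_lt hy)
  have hterm : 0 < (a 1 * b 0 - a 0 * b 1) * (y ^ 1 * x ^ 0 - y ^ 0 * x ^ 1) := by
    have h01 := (div_lt_div_iff₀ (hb 0) (hb 1)).mp (hmono zero_lt_one)
    simp only [pow_one, pow_zero, one_mul, mul_one]
    exact mul_pos (by linarith) (by linarith)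
  have hpos := hasSum_lt (i := ((1, 0) : ℕ × ℕ))
    (cross_term_nonneg hb hmono.monotone hx hxy.le) hterm hasSum_zero hsum
  linarith

end PowerSeries

theorem statement_5_general (a b : ℕ → ℝ) (r : ℝ)
    (hA : ∀ x : ℝ, |x| < r → Summable (fun n => a n * x ^ n))
    (hB : ∀ x : ℝ, |x| < r → Summable (fun n => b n * x ^ n))
    (hb : ∀ n, 0 < b n) :
    (Monotone (fun n => a n / b n) →
      MonotoneOn (fun x : ℝ => (∑' n : ℕ, a n * x ^ n) / (∑' n : ℕ, b n * x ^ n))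
        (Set.Ico 0 r)) ∧
    (StrictMono (fun n => a n / b n) →
      StrictMonoOn (fun x : ℝ => (∑' n : ℕ, a n * x ^ n) / (∑' n : ℕ, b n * x ^ n))
        (Set.Ico 0 r)) := by
  have hBpos : ∀ {x}, x ∈ Set.Ico 0 r → 0 < ∑' n, b n * x ^ n := fun hx =>
    tsum_mul_pow_pos hb hx.1 (hB _ ((abs_of_nonneg hx.1).trans_lt hx.2))
  refine ⟨fun hmono x hx y hy hxy => ?_, fun hmono x hx y hy hxy => ?_⟩
  · exact (div_le_div_iff₀ (hBpos hx) (hBpos hy)).mpr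
      (tsum_mul_tsum_le_of_monotone_div hA hB hb hmono hx.1 hxy hy.2)
  · exact (div_lt_div_iff₀ (hBpos hx) (hBpos hy)).mpr
      (tsum_mul_tsum_lt_of_strictMono_div hA hB hb hmono hx.1 hxy hy.2)

theorem statement_5 (a b : ℕ → ℝ) (r : ℝ) (hr : 0 < r)
    (hA : ∀ x : ℝ, |x| < r → Summable (fun n => a n * x ^ n))
    (hB : ∀ x : ℝ, |x| < r → Summable (fun n => b n * x ^ n))
    (hb : ∀ n, 0 < b n) :
    (Monotone (fun n => a n / b n) →
      MonotoneOn (fun x : ℝ => (∑' n : ℕ, a n * x ^ n) / (∑' n : ℕ, b n * x ^ n))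
        (Set.Ico 0 r)) ∧
    (StrictMono (fun n => a n / b n) →
      StrictMonoOn (fun x : ℝ => (∑' n : ℕ, a n * x ^ n) / (∑' n : ℕ, b n * x ^ n))
        (Set.Ico 0 r)) :=
  statement_5_general a b r hA hB hb
end

section
/- For every n ∈ ℕ, n ≥ 1, and every x > 0, the two-sided inequality (n+1)/(n+2) ≤ R_{n-1}(x) R_{n+1}(x) / [R_n(x)]² < 1 holds, and both constants are best possible: the lower bound is the limit as x → 0⁺ and the upper bound is the limit as x → ∞. -/
/-!
Write `Q_k(x) = e^x - ∑_{i<k} x^i/i!` (`expTail k`), so that `R_n = Q_{n+1}`,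
`Q_k' = Q_{k-1}` and `Q_k = Q_{k+1} + x^k/k!`. As `x → 0⁺`, `Q_k ~ x^k/k!`, and as `x → ∞`,
`Q_k ~ e^x`; this gives both limits of `Q_k Q_{k+2} / Q_{k+1}^2`, namely `(k+1)/(k+2)` and `1`.

The upper bound reduces, via `Q_k = Q_{k+1} + x^k/k!`, to `(k+1) Q_{k+2} < x Q_{k+1}`; the
difference `x Q_{k-1} - k Q_k` vanishes at `0` and its derivative is the previous difference,
so it is positive by induction.

For the lower bound, the gap `G_k = (k+1) Q_{k-1} Q_{k+1} - k Q_k^2` (`turanGap k`) satisfies,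
with `p = k/(k+1)`, `(G_{k+1} Q_{k+1}^{-p})' = (k+2)/(k+1) · Q_{k+2} Q_{k+1}^{-p-1} G_k`, while
`G_{k+1} Q_{k+1}^{-p} = (G_{k+1}/Q_{k+1}^2) · Q_{k+1}^{2-p} → 0` at `0⁺` by the asymptotics.
Hence positivity of `G_k` propagates from `G_0 = Q_0 Q_1 > 0`.
-/

/-- `R_n(x) = e^x − Σ_{k=0}^n x^k/k!`, the remainder of the exponential series. -/
noncomputable def R (n : ℕ) (x : ℝ) : ℝ :=
  Real.exp x - ∑ k ∈ Finset.range (n + 1), x ^ k / k.factorial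

open Real Filter Set Finset Asymptotics Topology
open scoped Nat

lemma pos_of_tendsto_nhdsGT_zero_of_deriv_pos {f f' : ℝ → ℝ}
    (hlim : Tendsto f (𝓝[>] 0) (𝓝 0)) (hf : ∀ x, 0 < x → HasDerivAt f (f' x) x)
    (hf' : ∀ x, 0 < x → 0 < f' x) {x : ℝ} (hx : 0 < x) : 0 < f x := by
  have mono : StrictMonoOn f (Ioi 0) := by
    refine strictMonoOn_of_deriv_pos (convex_Ioi 0)
      (fun y hy => (hf y hy).continuousAt.continuousWithinAt) fun y hy => ?_
    rw [interior_Ioi] at hy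
    rw [(hf y hy).deriv]
    exact hf' y hy
  have half_nonneg : 0 ≤ f (x / 2) := by
    refine le_of_tendsto hlim ?_
    filter_upwards [Ioo_mem_nhdsGT (half_pos hx)] with y hy
    exact (mono hy.1 (half_pos hx) hy.2).le
  linarith [mono (half_pos hx) hx (half_lt_self hx)]

noncomputable def expTail (k : ℕ) (x : ℝ) : ℝ :=
  exp x - ∑ i ∈ range k, x ^ i / i !

lemma expTail_eq_expTail_succ_add (k : ℕ) (x : ℝ) :
    expTail k x = expTail (k + 1) x + x ^ k / k ! := by
  simp only [expTail, sum_range_succ]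
  ring

lemma expTail_succ_zero (k : ℕ) : expTail (k + 1) 0 = 0 := by
  simp [expTail, sum_range_succ']

lemma pow_div_factorial_le_expTail (k : ℕ) {x : ℝ} (hx : 0 ≤ x) :
    x ^ k / k ! ≤ expTail k x := by
  have h := sum_le_exp_of_nonneg hx (k + 1)
  rw [sum_range_succ] at h
  rw [expTail]
  linarith

lemma expTail_pos (k : ℕ) {x : ℝ} (hx : 0 < x) : 0 < expTail k x :=
  (by positivity : (0 : ℝ) < x ^ k / k !).trans_le (pow_div_factorial_le_expTail k hx.le)

lemma continuous_expTail (k : ℕ) : Continuous (expTail k) := by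
  unfold expTail
  fun_prop

lemma hasDerivAt_expTail_succ (k : ℕ) (x : ℝ) :
    HasDerivAt (expTail (k + 1)) (expTail k x) x := by
  induction k with
  | zero =>
    have h1 : expTail 1 = fun y => exp y - 1 := by funext y; simp [expTail]
    simpa [h1, expTail] using (hasDerivAt_exp x).sub_const 1
  | succ k ih =>
    have hk : expTail (k + 2) = fun y => expTail (k + 1) y - y ^ (k + 1) / (k + 1)! := by
      funext y
      rw [expTail_eq_expTail_succ_add (k + 1) y]
      ring
    rw [hk]
    refine (ih.sub ((hasDerivAt_pow (k + 1) x).div_const _)).congr_deriv ?_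
    rw [expTail_eq_expTail_succ_add k x, Nat.factorial_succ]
    push_cast
    field_simp
    ring

-- `k - 1` truncates to `0` at `k = 0`, where `expTail 0 = exp` is its own derivative.
lemma hasDerivAt_expTail (k : ℕ) (x : ℝ) : HasDerivAt (expTail k) (expTail (k - 1) x) x := by
  cases k with
  | zero =>
    have h0 : expTail 0 = exp := by funext y; simp [expTail]
    simpa [h0] using hasDerivAt_exp x
  | succ k => exact hasDerivAt_expTail_succ k x

lemma natCast_mul_expTail_lt (k : ℕ) {x : ℝ} (hx : 0 < x) :
    (k : ℝ) * expTail k x < x * expTail (k - 1) x := by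
  induction k generalizing x with
  | zero => simpa using mul_pos hx (expTail_pos 0 hx)
  | succ k ih =>
    have hderiv : ∀ y, HasDerivAt (fun y => y * expTail k y - (k + 1) * expTail (k + 1) y)
        (y * expTail (k - 1) y - k * expTail k y) y := fun y => by
      refine (((hasDerivAt_id y).mul (hasDerivAt_expTail k y)).sub
        ((hasDerivAt_expTail_succ k y).const_mul ((k : ℝ) + 1))).congr_deriv ?_
      simp only [id]
      ring
    have hlim : Tendsto (fun y => y * expTail k y - (k + 1) * expTail (k + 1) y)
        (𝓝[>] 0) (𝓝 0) := by
      refine ((Continuous.tendsto' ?_ 0 0 ?_)).mono_left nhdsWithin_le_nhds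
      · have := continuous_expTail k; have := continuous_expTail (k + 1); fun_prop
      · simp [expTail_succ_zero]
    have := pos_of_tendsto_nhdsGT_zero_of_deriv_pos hlim (fun y _ => hderiv y)
      (fun y hy => sub_pos.2 (ih hy)) hx
    push_cast
    linarith

lemma expTail_mul_expTail_lt_sq (k : ℕ) {x : ℝ} (hx : 0 < x) :
    expTail k x * expTail (k + 2) x < expTail (k + 1) x ^ 2 := by
  set a := x ^ k / (k !)
  set b := x ^ (k + 1) / ((k + 1)!)
  have hab : (k + 1) * b = x * a := by
    simp only [a, b, Nat.factorial_succ, pow_succ]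
    push_cast
    field_simp
  have key : (k + 1) * (expTail (k + 1) x ^ 2 - expTail k x * expTail (k + 2) x) =
      a * (x * expTail (k + 1) x - (k + 1) * expTail (k + 2) x) := by
    linear_combination (-(k + 1) * expTail (k + 2) x) * expTail_eq_expTail_succ_add k x +
      ((k + 1) * expTail (k + 1) x) * expTail_eq_expTail_succ_add (k + 1) x +
      expTail (k + 1) x * hab
  have hratio := natCast_mul_expTail_lt (k + 2) hx
  push_cast at hratio
  have hQ := expTail_pos (k + 2) hx
  have hpos : 0 < (k + 1) * (expTail (k + 1) x ^ 2 - expTail k x * expTail (k + 2) x) := by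
    rw [key]
    exact mul_pos (by positivity) (by linarith)
  linarith [pos_of_mul_pos_right hpos (by positivity)]

lemma isEquivalent_expTail_nhdsGT_zero (k : ℕ) :
    expTail k ~[𝓝[>] 0] fun x => x ^ k / k ! := by
  have hsub : expTail k - (fun x : ℝ => x ^ k / k !) = expTail (k + 1) := by
    funext x
    simp [expTail_eq_expTail_succ_add k x]
  refine IsLittleO.isEquivalent ?_
  rw [hsub]
  refine ((exp_sub_sum_range_succ_isLittleO_pow k).mono nhdsWithin_le_nhds).trans_isBigO ?_
  simpa [div_eq_inv_mul] using
    isBigO_self_const_mul (inv_ne_zero (by positivity : (k ! : ℝ) ≠ 0)) (fun x : ℝ => x ^ k) _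

lemma isEquivalent_expTail_atTop (k : ℕ) : expTail k ~[atTop] exp := by
  refine IsLittleO.isEquivalent ?_
  have hsub : expTail k - exp = fun x : ℝ => -∑ i ∈ range k, x ^ i / i ! := by
    funext x
    simp [expTail]
  rw [hsub, isLittleO_neg_left]
  refine IsLittleO.fun_sum fun i _ => ?_
  simpa [div_eq_inv_mul] using isLittleO_pow_exp_atTop.const_mul_left ((i ! : ℝ)⁻¹)

lemma tendsto_expTail_ratio_of_isEquivalent {l : Filter ℝ} {u : ℕ → ℝ → ℝ} {c : ℝ} (k : ℕ)
    (hu : ∀ j, expTail j ~[l] u j)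
    (hc : ∀ᶠ x in l, u k x * u (k + 2) x / u (k + 1) x ^ 2 = c) :
    Tendsto (fun x => expTail k x * expTail (k + 2) x / expTail (k + 1) x ^ 2) l (𝓝 c) :=
  (((hu k).mul (hu (k + 2))).div ((hu (k + 1)).pow 2)).symm.tendsto_nhds
    (tendsto_const_nhds.congr' (hc.mono fun _ hx => hx.symm))

lemma tendsto_expTail_ratio_nhdsGT_zero (k : ℕ) :
    Tendsto (fun x => expTail k x * expTail (k + 2) x / expTail (k + 1) x ^ 2) (𝓝[>] 0)
      (𝓝 ((k + 1) / (k + 2))) := by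
  refine tendsto_expTail_ratio_of_isEquivalent k isEquivalent_expTail_nhdsGT_zero ?_
  filter_upwards [self_mem_nhdsWithin] with x (hx : 0 < x)
  simp only [Nat.factorial_succ, pow_succ]
  push_cast
  field_simp
  ring

lemma tendsto_expTail_ratio_atTop (k : ℕ) :
    Tendsto (fun x => expTail k x * expTail (k + 2) x / expTail (k + 1) x ^ 2) atTop (𝓝 1) :=
  tendsto_expTail_ratio_of_isEquivalent k isEquivalent_expTail_atTop
    (Eventually.of_forall fun x => by field_simp)

noncomputable def turanGap (k : ℕ) (x : ℝ) : ℝ :=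
  (k + 1) * (expTail (k - 1) x * expTail (k + 1) x) - k * expTail k x ^ 2

lemma turanGap_succ (k : ℕ) (x : ℝ) :
    turanGap (k + 1) x = (k + 2) * (expTail k x * expTail (k + 2) x) -
      (k + 1) * expTail (k + 1) x ^ 2 := by
  simp only [turanGap, Nat.add_sub_cancel]
  push_cast
  ring

lemma hasDerivAt_turanGap_succ (k : ℕ) (x : ℝ) : HasDerivAt (turanGap (k + 1))
    ((k + 2) * (expTail (k - 1) x * expTail (k + 2) x + expTail k x * expTail (k + 1) x) -
      2 * (k + 1) * (expTail k x * expTail (k + 1) x)) x := by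
  rw [show turanGap (k + 1) = _ from funext (turanGap_succ k)]
  refine ((((hasDerivAt_expTail k x).mul (hasDerivAt_expTail_succ (k + 1) x)).const_mul
    ((k : ℝ) + 2)).sub (((hasDerivAt_expTail_succ k x).pow 2).const_mul
      ((k : ℝ) + 1))).congr_deriv ?_
  push_cast
  ring

lemma hasDerivAt_turanGap_succ_mul_rpow (k : ℕ) {x : ℝ} (hx : 0 < x) :
    HasDerivAt (fun y => turanGap (k + 1) y * expTail (k + 1) y ^ (-(k / (k + 1) : ℝ)))
      ((k + 2) / (k + 1) * expTail (k + 2) x *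
        expTail (k + 1) x ^ (-(k / (k + 1) : ℝ) - 1) * turanGap k x) x := by
  have hQ := expTail_pos (k + 1) hx
  refine ((hasDerivAt_turanGap_succ k x).mul
    ((hasDerivAt_expTail_succ k x).rpow_const (Or.inl hQ.ne'))).congr_deriv ?_
  have hfac : expTail (k + 1) x ^ (-(k / (k + 1) : ℝ)) =
      expTail (k + 1) x ^ (-(k / (k + 1) : ℝ) - 1) * expTail (k + 1) x := by
    rw [← rpow_add_one hQ.ne', sub_add_cancel]
  rw [hfac, turanGap_succ, turanGap]
  generalize expTail (k + 1) x ^ (-(k / (k + 1) : ℝ) - 1) = w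
  field_simp
  ring

lemma tendsto_turanGap_succ_mul_rpow_nhdsGT_zero (k : ℕ) :
    Tendsto (fun y => turanGap (k + 1) y * expTail (k + 1) y ^ (-(k / (k + 1) : ℝ)))
      (𝓝[>] 0) (𝓝 0) := by
  set p : ℝ := k / (k + 1)
  have hgap :
      Tendsto (fun y => turanGap (k + 1) y / expTail (k + 1) y ^ 2) (𝓝[>] 0) (𝓝 0) := by
    have h := ((tendsto_expTail_ratio_nhdsGT_zero k).const_mul ((k : ℝ) + 2)).sub_const
      ((k : ℝ) + 1)
    rw [mul_div_cancel₀ _ (by positivity), sub_self] at h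
    refine h.congr' ?_
    filter_upwards [self_mem_nhdsWithin] with y (hy : 0 < y)
    have := (expTail_pos (k + 1) hy).ne'
    rw [turanGap_succ]
    field_simp
  have hpow : Tendsto (fun y => expTail (k + 1) y ^ (2 - p)) (𝓝[>] 0) (𝓝 0) := by
    have h0 : Tendsto (expTail (k + 1)) (𝓝[>] 0) (𝓝 0) :=
      ((continuous_expTail (k + 1)).tendsto' 0 0 (expTail_succ_zero k)).mono_left
        nhdsWithin_le_nhds
    have hp : 0 < 2 - p := by
      have : p < 1 := (div_lt_one (by positivity)).2 (by linarith)
      linarith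
    simpa [zero_rpow hp.ne'] using h0.rpow_const (Or.inr hp.le)
  have hprod := hgap.mul hpow
  rw [zero_mul] at hprod
  refine hprod.congr' ?_
  filter_upwards [self_mem_nhdsWithin] with y (hy : 0 < y)
  have hQ := expTail_pos (k + 1) hy
  rw [rpow_sub hQ, rpow_neg hQ.le, rpow_two]
  field_simp

lemma turanGap_pos (k : ℕ) {x : ℝ} (hx : 0 < x) : 0 < turanGap k x := by
  induction k generalizing x with
  | zero => simpa [turanGap] using mul_pos (expTail_pos 0 hx) (expTail_pos 1 hx)
  | succ k ih =>
    have hQ := expTail_pos (k + 1) hx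
    refine pos_of_mul_pos_left (pos_of_tendsto_nhdsGT_zero_of_deriv_pos
      (tendsto_turanGap_succ_mul_rpow_nhdsGT_zero k)
      (fun y hy => hasDerivAt_turanGap_succ_mul_rpow k hy) (fun y hy => ?_) hx)
      (rpow_nonneg hQ.le _)
    have := expTail_pos (k + 1) hy
    have := expTail_pos (k + 2) hy
    have := ih hy
    positivity

theorem statement_11 (n : ℕ) (hn : 1 ≤ n) :
    (∀ x : ℝ, 0 < x →
      (n + 1 : ℝ) / (n + 2) ≤ R (n - 1) x * R (n + 1) x / (R n x) ^ 2 ∧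
        R (n - 1) x * R (n + 1) x / (R n x) ^ 2 < 1) ∧
    Filter.Tendsto (fun x : ℝ => R (n - 1) x * R (n + 1) x / (R n x) ^ 2)
      (nhdsWithin 0 (Set.Ioi 0)) (nhds ((n + 1 : ℝ) / (n + 2))) ∧
    Filter.Tendsto (fun x : ℝ => R (n - 1) x * R (n + 1) x / (R n x) ^ 2)
      Filter.atTop (nhds 1) := by
  have hR : (fun x : ℝ => R (n - 1) x * R (n + 1) x / (R n x) ^ 2) =
      fun x => expTail n x * expTail (n + 2) x / expTail (n + 1) x ^ 2 := by
    simp only [R, expTail, Nat.sub_add_cancel hn]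
  refine ⟨fun x hx => ?_, hR ▸ tendsto_expTail_ratio_nhdsGT_zero n,
    hR ▸ tendsto_expTail_ratio_atTop n⟩
  have hQ := expTail_pos (n + 1) hx
  have hgap := turanGap_pos (n + 1) hx
  rw [turanGap_succ] at hgap
  rw [congrFun hR x, div_le_div_iff₀ (by positivity) (by positivity), div_lt_one (by positivity)]
  exact ⟨by linarith, expTail_mul_expTail_lt_sq n hx⟩
end

section
/- Let r ≥ 1 and let a = (a_1,…,a_{r+1}), b = (b_1,…,b_r), c = (c_1,…,c_r) be real parameters with a_j > 0 for all j and b_i > c_i > 0 for i = 1,…,r. Then for all x with 0 ≤ x < 1 the Turán type inequality [₍r+1₎F_r(a_1,…,a_{r+1}; b_1,…,b_r; x)]² ≤ ₍r+1₎F_r(a_1,…,a_{r+1}; b_1−c_1,…,b_r−c_r; x)·₍r+1₎F_r(a_1,…,a_{r+1}; b_1+c_1,…,b_r+c_r; x) holds. -/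
/-- The ascending factorial (Pochhammer symbol) `(a)_n = a(a+1)⋯(a+n-1)`. -/
noncomputable def ascPoch (a : ℝ) (n : ℕ) : ℝ :=
  ∏ k ∈ Finset.range n, (a + k)

/-- The generalized hypergeometric function with `r+1` upper and `r` lower parameters. -/
noncomputable def genHyp (r : ℕ) (a : Fin (r + 1) → ℝ) (b : Fin r → ℝ) (x : ℝ) : ℝ :=
  ∑' n : ℕ, (∏ j, ascPoch (a j) n) / ((∏ j, ascPoch (b j) n) * n.factorial) * x ^ n

/-!
Since `(b - c + k)(b + c + k) = (b + k)² - c² ≤ (b + k)²`, the Pochhammer symbols satisfy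
`(b - c)ₙ (b + c)ₙ ≤ (b)ₙ²`, so the `n`-th term `tₙ` of the series with lower parameters `b`
dominates the geometric mean of the `n`-th terms `uₙ, vₙ` of the series with `b ∓ c`:
`tₙ² ≤ uₙ vₙ`. The Cauchy–Schwarz inequality for series then gives `(∑ tₙ)² ≤ (∑ uₙ)(∑ vₙ)`.
-/

open Filter Topology Finset

theorem tsum_sq_le_tsum_mul_tsum {ι : Type*} {r f g : ι → ℝ} (hf : ∀ i, 0 ≤ f i)
    (hg : ∀ i, 0 ≤ g i) (hsf : Summable f) (hsg : Summable g) (h : ∀ i, r i ^ 2 ≤ f i * g i) :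
    (∑' i, r i) ^ 2 ≤ (∑' i, f i) * ∑' i, g i := by
  have hsr : Summable r := by
    refine .of_norm_bounded ((hsf.add hsg).div_const 2) fun i => ?_
    have := two_mul_le_add_of_sq_le_mul (r := |r i|) (hf i) (hg i) (by simpa [sq_abs] using h i)
    rw [Real.norm_eq_abs]
    linarith
  refine le_of_tendsto' (hsr.hasSum.pow 2) fun s => ?_
  calc (∑ i ∈ s, r i) ^ 2 ≤ (∑ i ∈ s, f i) * ∑ i ∈ s, g i :=
        sum_sq_le_sum_mul_sum_of_sq_le_mul s (fun i _ => hf i) (fun i _ => hg i) fun i _ => h i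
    _ ≤ (∑' i, f i) * ∑' i, g i :=
        mul_le_mul (hsf.sum_le_tsum s fun i _ => hf i) (hsg.sum_le_tsum s fun i _ => hg i)
          (sum_nonneg fun i _ => hg i) (tsum_nonneg hf)

theorem tendsto_prod_add_div_prod_add {ι : Type*} [Fintype ι] (a b : ι → ℝ) :
    Tendsto (fun n : ℕ => (∏ i, (a i + n)) / ∏ i, (b i + n)) atTop (𝓝 1) := by
  have h := tendsto_finsetProd univ fun i _ => by
    simpa using tendsto_add_mul_div_add_mul_atTop_nhds (a i) (b i) 1 one_ne_zero
  rw [prod_const_one] at h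
  exact h.congr fun n => prod_div_distrib _ _

section Pochhammer

theorem ascPoch_pos {a : ℝ} (ha : 0 < a) (n : ℕ) : 0 < ascPoch a n :=
  prod_pos fun k _ => by positivity

theorem ascPoch_succ (a : ℝ) (n : ℕ) : ascPoch a (n + 1) = ascPoch a n * (a + n) :=
  prod_range_succ _ _

theorem ascPoch_sub_mul_ascPoch_add_le_sq {b c : ℝ} (hm : 0 ≤ b - c) (hp : 0 ≤ b + c)
    (n : ℕ) : ascPoch (b - c) n * ascPoch (b + c) n ≤ ascPoch b n ^ 2 := by
  unfold ascPoch
  rw [← prod_mul_distrib, ← prod_pow]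
  refine prod_le_prod (fun k _ => by positivity) fun k _ => ?_
  nlinarith [sq_nonneg c]

end Pochhammer

section Terms

variable {r : ℕ}

noncomputable def genHypTerm (r : ℕ) (a : Fin (r + 1) → ℝ) (b : Fin r → ℝ) (x : ℝ) (n : ℕ) :
    ℝ :=
  (∏ j, ascPoch (a j) n) / ((∏ j, ascPoch (b j) n) * n.factorial) * x ^ n

theorem genHyp_eq_tsum_genHypTerm (a : Fin (r + 1) → ℝ) (b : Fin r → ℝ) (x : ℝ) :
    genHyp r a b x = ∑' n, genHypTerm r a b x n :=
  rfl

theorem genHypTerm_nonneg {a : Fin (r + 1) → ℝ} {b : Fin r → ℝ} {x : ℝ} (ha : ∀ j, 0 < a j)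
    (hb : ∀ j, 0 < b j) (hx : 0 ≤ x) (n : ℕ) : 0 ≤ genHypTerm r a b x n := by
  have hA : 0 < ∏ j, ascPoch (a j) n := prod_pos fun j _ => ascPoch_pos (ha j) n
  have hB : 0 < ∏ j, ascPoch (b j) n := prod_pos fun j _ => ascPoch_pos (hb j) n
  unfold genHypTerm
  positivity

theorem genHypTerm_succ (a : Fin (r + 1) → ℝ) {b : Fin r → ℝ} (x : ℝ) (hb : ∀ j, 0 < b j)
    (n : ℕ) : genHypTerm r a b x (n + 1) =
      (∏ j, (a j + n)) / ((∏ j, (b j + n)) * (n + 1)) * x * genHypTerm r a b x n := by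
  have hB : 0 < ∏ j, ascPoch (b j) n := prod_pos fun j _ => ascPoch_pos (hb j) n
  have hB' : 0 < ∏ j, (b j + n) := prod_pos fun j _ => by linarith [hb j]
  unfold genHypTerm
  simp only [ascPoch_succ, prod_mul_distrib, Nat.factorial_succ, Nat.cast_mul, Nat.cast_succ,
    pow_succ]
  field_simp

theorem tendsto_genHypTerm_ratio (a : Fin (r + 1) → ℝ) (b : Fin r → ℝ) (x : ℝ) :
    Tendsto (fun n : ℕ => (∏ j, (a j + n)) / ((∏ j, (b j + n)) * (n + 1)) * x) atTop
      (𝓝 x) := by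
  -- the factor `n + 1` comes from the extra lower parameter `1`, as `n! = (1)ₙ`
  have hsnoc : ∀ n : ℕ, ∏ j, ((Fin.snoc b 1 : Fin (r + 1) → ℝ) j + n) =
      (∏ j, (b j + n)) * (n + 1) := fun n => by
    simp [Fin.prod_univ_castSucc, add_comm]
  simpa only [hsnoc, one_mul] using
    (tendsto_prod_add_div_prod_add a (Fin.snoc b 1 : Fin (r + 1) → ℝ)).mul_const x

theorem summable_genHypTerm (a : Fin (r + 1) → ℝ) {b : Fin r → ℝ} {x : ℝ} (hb : ∀ j, 0 < b j)
    (hx : |x| < 1) : Summable (genHypTerm r a b x) := by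
  obtain ⟨l, hxl, hl⟩ := exists_between hx
  refine summable_of_ratio_norm_eventually_le hl ?_
  filter_upwards [(tendsto_genHypTerm_ratio a b x).norm.eventually_le_const hxl] with n hn
  rw [genHypTerm_succ a x hb, norm_mul]
  exact mul_le_mul_of_nonneg_right hn (norm_nonneg _)

theorem genHypTerm_sq_le (a : Fin (r + 1) → ℝ) {b c : Fin r → ℝ} (x : ℝ)
    (hm : ∀ i, 0 < b i - c i) (hp : ∀ i, 0 < b i + c i) (n : ℕ) :
    genHypTerm r a b x n ^ 2 ≤
      genHypTerm r a (fun i => b i - c i) x n * genHypTerm r a (fun i => b i + c i) x n := by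
  have hterm : ∀ b' : Fin r → ℝ, genHypTerm r a b' x n =
      (∏ j, ascPoch (a j) n) * x ^ n / n.factorial / ∏ j, ascPoch (b' j) n := fun b' => by
    unfold genHypTerm
    ring
  have hQ : (∏ j, ascPoch (b j - c j) n) * ∏ j, ascPoch (b j + c j) n ≤
      (∏ j, ascPoch (b j) n) ^ 2 := by
    rw [← prod_mul_distrib, ← prod_pow]
    exact prod_le_prod (fun j _ => (mul_pos (ascPoch_pos (hm j) n) (ascPoch_pos (hp j) n)).le)
      fun j _ => ascPoch_sub_mul_ascPoch_add_le_sq (hm j).le (hp j).le n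
  have hQpos : 0 < (∏ j, ascPoch (b j - c j) n) * ∏ j, ascPoch (b j + c j) n :=
    mul_pos (prod_pos fun j _ => ascPoch_pos (hm j) n) (prod_pos fun j _ => ascPoch_pos (hp j) n)
  simp only [hterm, div_pow, div_mul_div_comm, ← sq]
  exact div_le_div_of_nonneg_left (by positivity) hQpos hQ

end Terms

theorem statement_17_general (r : ℕ) (a : Fin (r + 1) → ℝ) (b c : Fin r → ℝ)
    (ha : ∀ j, 0 < a j) (hbc : ∀ i, b i > c i) (hc : ∀ i, 0 < c i)
    (x : ℝ) (hx0 : 0 ≤ x) (hx1 : x < 1) :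
    (genHyp r a b x) ^ 2 ≤
      genHyp r a (fun i => b i - c i) x * genHyp r a (fun i => b i + c i) x := by
  have hm : ∀ i, 0 < b i - c i := fun i => sub_pos.mpr (hbc i)
  have hp : ∀ i, 0 < b i + c i := fun i => by linarith [hbc i, hc i]
  have hx : |x| < 1 := abs_lt.mpr ⟨by linarith, hx1⟩
  simp only [genHyp_eq_tsum_genHypTerm]
  exact tsum_sq_le_tsum_mul_tsum (genHypTerm_nonneg ha hm hx0) (genHypTerm_nonneg ha hp hx0)
    (summable_genHypTerm a hm hx) (summable_genHypTerm a hp hx) (genHypTerm_sq_le a x hm hp)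

theorem statement_17 (r : ℕ) (hr : 1 ≤ r) (a : Fin (r + 1) → ℝ) (b c : Fin r → ℝ)
    (ha : ∀ j, 0 < a j) (hbc : ∀ i, b i > c i) (hc : ∀ i, 0 < c i)
    (x : ℝ) (hx0 : 0 ≤ x) (hx1 : x < 1) :
    (genHyp r a b x) ^ 2 ≤
      genHyp r a (fun i => b i - c i) x * genHyp r a (fun i => b i + c i) x :=
  statement_17_general r a b c ha hbc hc x hx0 hx1
end
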